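/- Let γ ∈ (−1,0) ∪ (0,1). Then the function F_{1,γ} satisfies: (i) for every t ∈ (0,∞) with t ≠ 1, F_{1,γ} is differentiable at t with F_{1,γ}'(t) = −[(1+t²)(|1−t|^γ − (1+t)^γ) + γ t (|1−t|^γ + (1+t)^γ)]/(γ(2+γ) t²); (ii) F_{1,γ}'(1/t) = t^{2−γ} F_{1,γ}'(t) for all t ∈ (0,∞) with t ≠ 1; (iii) lim_{t→0+} F_{1,γ}(t) = 0 and lim_{t→0+} F_{1,γ}'(t) = 0; (iv) lim_{t→+∞} F_{1,γ}(t) = 2/(1+γ); (v) lim_{t→0+} F_{1,γ}'(t)/t = 2(2−γ)/3; (vi) F_{1,γ}'(t) > 0 for every t ∈ (0,∞) with t ≠ 1. -/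

import Mathlib

/-!
The numerators of `F1 γ t` and of `F1d γ t` vanish at `t = 0` to order two and three, so the
limits at `0+` follow from derivatives at `0` and one application of L'Hôpital's rule; the limit
at `+∞` is the same argument in the variable `s = 1/t`.

For positivity put `u = 1 + t`, `v = |1 - t|` and `r = v / u ∈ (0, 1)`. Since `2(1 + t²) = u² + v²`
and `4t = u² - v²`, the numerator of `F1d` is `u^(2+γ) φ(r) / 4` with
`φ(r) = (2-γ)(1 - r^(2+γ)) - (2+γ)(r^γ - r²)`. Both `φ` and `η(r) = 2r^(2-γ) - (2-γ)r² - γ`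
vanish at `r = 1`, `φ'(r) = (2+γ) r^(γ-1) η(r)` and `η'(r) = 2(2-γ)(r^(1-γ) - r)`; as
`γ (r^(1-γ) - r) > 0` on `(0, 1)`, two monotonicity arguments give `γ φ(r) > 0`.
-/

open Real Set Filter Topology

noncomputable section

namespace GSQGaux

/-- The auxiliary function
`F_{1,γ}(t) = [2γ(2+γ)t - (1+γ-t)(1+t)(1+t)^γ + (1-t)(1+γ+t)|1-t|^γ] / (γ(1+γ)(2+γ)t)`. -/
def F1 (γ t : ℝ) : ℝ :=
  (2*γ*(2+γ)*t - (1+γ-t)*(1+t)*(1+t)^γ + (1-t)*(1+γ+t)*|1-t|^γ) /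
    (γ*(1+γ)*(2+γ)*t)

/-- The explicit formula for the derivative of `F_{1,γ}`:
`F_{1,γ}'(t) = -[(1+t²)(|1-t|^γ - (1+t)^γ) + γt(|1-t|^γ + (1+t)^γ)] / (γ(2+γ)t²)`. -/
def F1d (γ t : ℝ) : ℝ :=
  -(((1+t^2)*(|1-t|^γ - (1+t)^γ) + γ*t*(|1-t|^γ + (1+t)^γ)) / (γ*(2+γ)*t^2))

theorem hasDerivAt_abs_rpow_of_ne_zero (p : ℝ) {x : ℝ} (hx : x ≠ 0) :
    HasDerivAt (fun x : ℝ => |x| ^ p) (p * |x| ^ (p - 2) * x) x := by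
  have hx' : 0 < |x| := abs_pos.2 hx
  refine ((hasDerivAt_abs hx).rpow_const (p := p) (Or.inl hx'.ne')).congr_deriv ?_
  rw [Real.rpow_sub_one hx'.ne', Real.rpow_sub hx', Real.rpow_two, sq_abs]
  rcases hx.lt_or_gt with h | h
  · rw [sign_neg h, abs_of_neg h]; field_simp; simp
  · rw [sign_pos h, abs_of_pos h]; field_simp; simp

theorem tendsto_div_nhdsGT_zero_of_hasDerivAt {f : ℝ → ℝ} {f' : ℝ} (hf : HasDerivAt f f' 0)
    (hf0 : f 0 = 0) : Tendsto (fun x => f x / x) (𝓝[>] 0) (𝓝 f') := by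
  simpa [hf0, div_eq_inv_mul] using hf.tendsto_slope_zero_right

theorem tendsto_div_pow_nhdsGT_zero {f f' : ℝ → ℝ} {l : ℝ} (n : ℕ)
    (hf : ∀ᶠ x in 𝓝[>] 0, HasDerivAt f (f' x) x) (hf0 : Tendsto f (𝓝[>] 0) (𝓝 0))
    (hf' : Tendsto (fun x => f' x / ((n + 1) * x ^ n)) (𝓝[>] 0) (𝓝 l)) :
    Tendsto (fun x => f x / x ^ (n + 1)) (𝓝[>] 0) (𝓝 l) := by
  refine HasDerivAt.lhopital_zero_nhdsGT hf (Eventually.of_forall fun x => ?_) ?_ hf0 ?_ hf'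
  · simpa using hasDerivAt_pow (n + 1) x
  · filter_upwards [self_mem_nhdsWithin] with x hx
    exact mul_ne_zero (by positivity) (pow_ne_zero _ (ne_of_gt hx))
  · simpa using
      ((continuous_pow (n + 1)).tendsto' (0 : ℝ) 0 (by simp)).mono_left nhdsWithin_le_nhds

theorem lt_of_hasDerivAt_pos {f f' : ℝ → ℝ} {a b : ℝ} (hab : a < b)
    (hf : ∀ x ∈ Icc a b, HasDerivAt f (f' x) x) (hf' : ∀ x ∈ Ioo a b, 0 < f' x) : f a < f b := by
  refine strictMonoOn_of_hasDerivWithinAt_pos (f' := f') (convex_Icc a b)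
    (fun x hx => (hf x hx).continuousAt.continuousWithinAt) (fun x hx => ?_) (fun x hx => ?_)
    (left_mem_Icc.2 hab.le) (right_mem_Icc.2 hab.le) hab
  · rw [interior_Icc] at hx ⊢
    exact (hf x (Ioo_subset_Icc_self hx)).hasDerivWithinAt
  · rw [interior_Icc] at hx
    exact hf' x hx

def F1num (γ x : ℝ) : ℝ :=
  2*γ*(2+γ)*x - (1+γ-x)*(1+x)*(1+x)^γ + (1-x)*(1+γ+x)*|1-x|^γ

theorem hasDerivAt_F1num (γ : ℝ) {t : ℝ} (ht : -1 < t) (ht1 : t ≠ 1) :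
    HasDerivAt (F1num γ) ((2+γ)*(2*γ - (γ-t)*(1+t)^γ - (γ+t)*|1-t|^γ)) t := by
  have hu : 0 < 1 + t := by linarith
  have hv : 1 - t ≠ 0 := sub_ne_zero.2 ht1.symm
  have hpow : HasDerivAt (fun x : ℝ => (1+x)^γ) (1 * γ * (1+t)^(γ-1)) t :=
    ((hasDerivAt_id' t).const_add 1).rpow_const (Or.inl hu.ne')
  have habs : HasDerivAt (fun x : ℝ => |1-x|^γ) (γ * |1-t|^(γ-2) * (1-t) * (-1)) t :=
    (hasDerivAt_abs_rpow_of_ne_zero γ hv).comp t ((hasDerivAt_id' t).const_sub 1)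
  have := (((hasDerivAt_id' t).const_mul (2*γ*(2+γ))).sub
    ((((hasDerivAt_id' t).const_sub (1+γ)).mul ((hasDerivAt_id' t).const_add 1)).mul hpow)).add
    ((((hasDerivAt_id' t).const_sub 1).mul ((hasDerivAt_id' t).const_add (1+γ))).mul habs)
  refine this.congr_deriv ?_
  simp only [Pi.mul_apply]
  rw [Real.rpow_sub_one hu.ne', Real.rpow_sub (abs_pos.2 hv), Real.rpow_two, sq_abs]
  field_simp
  ring

theorem hasDerivAt_F1 {γ : ℝ} (hγ0 : γ ≠ 0) (hγ1 : 1 + γ ≠ 0) (hγ2 : 2 + γ ≠ 0) {t : ℝ}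
    (ht : 0 < t) (ht1 : t ≠ 1) : HasDerivAt (F1 γ) (F1d γ t) t := by
  have := (hasDerivAt_F1num γ (by linarith) ht1).div ((hasDerivAt_id' t).const_mul _)
    (by positivity : γ*(1+γ)*(2+γ)*t ≠ 0)
  refine this.congr_deriv ?_
  rw [F1d, F1num]
  field_simp
  ring

theorem F1d_one_div (γ : ℝ) {t : ℝ} (ht : 0 < t) : F1d γ (1/t) = t^(2-γ) * F1d γ t := by
  have habs : |1 - 1/t| ^ γ = |1-t|^γ / t^γ := by
    rw [show (1:ℝ) - 1/t = (t-1)/t by field_simp, abs_div, abs_of_pos ht, abs_sub_comm,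
      Real.div_rpow (abs_nonneg _) ht.le]
  have hadd : (1 + 1/t) ^ γ = (1+t)^γ / t^γ := by
    rw [show (1:ℝ)+1/t = (1+t)/t by field_simp; ring, Real.div_rpow (by positivity) ht.le]
  have hpow : t ^ (2-γ) = t^2 / t^γ := by
    rw [Real.rpow_sub ht, Real.rpow_two]
  have htγ : t^γ ≠ 0 := (Real.rpow_pos_of_pos ht γ).ne'
  rw [F1d, F1d, habs, hadd, hpow]
  field_simp
  ring

theorem tendsto_F1_nhdsGT_zero (γ : ℝ) : Tendsto (F1 γ) (𝓝[>] 0) (𝓝 0) := by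
  have hderiv : HasDerivAt (F1num γ) 0 0 := by
    convert hasDerivAt_F1num γ (t := 0) (by norm_num) (by norm_num) using 1
    simp only [add_zero, sub_zero, abs_one, Real.one_rpow]
    ring
  have hzero : F1num γ 0 = 0 := by simp [F1num]
  have := (tendsto_div_nhdsGT_zero_of_hasDerivAt hderiv hzero).div_const (γ*(1+γ)*(2+γ))
  rw [zero_div] at this
  refine this.congr fun x => ?_
  rw [F1, ← F1num, div_div, mul_comm x]

def F1dnum (γ x : ℝ) : ℝ := (1+x^2-γ*x)*(1+x)^γ - (1+x^2+γ*x)*(1-x)^γ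

def F1dnumDerivQuot (γ x : ℝ) : ℝ := (x+1-γ)*(1+x)^(γ-1) + (x-1+γ)*(1-x)^(γ-1)

theorem F1d_eq_F1dnum_div (γ : ℝ) {x : ℝ} (hx : x < 1) :
    F1d γ x = F1dnum γ x / (γ*(2+γ)*x^2) := by
  rw [F1d, F1dnum, abs_of_pos (sub_pos.2 hx), ← neg_div]
  ring_nf

theorem hasDerivAt_F1dnum (γ : ℝ) {x : ℝ} (hx : x ∈ Ioo (-1) 1) :
    HasDerivAt (F1dnum γ) ((2+γ)*x*F1dnumDerivQuot γ x) x := by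
  have hu : 0 < 1 + x := by linarith [hx.1]
  have hv : 0 < 1 - x := by linarith [hx.2]
  have hp : HasDerivAt (fun y : ℝ => (1+y)^γ) (1 * γ * (1+x)^(γ-1)) x :=
    ((hasDerivAt_id' x).const_add 1).rpow_const (Or.inl hu.ne')
  have hq : HasDerivAt (fun y : ℝ => (1-y)^γ) ((-1) * γ * (1-x)^(γ-1)) x :=
    ((hasDerivAt_id' x).const_sub 1).rpow_const (Or.inl hv.ne')
  have hsq := hasDerivAt_pow 2 x
  have := (((hsq.const_add 1).sub ((hasDerivAt_id' x).const_mul γ)).mul hp).sub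
    (((hsq.const_add 1).add ((hasDerivAt_id' x).const_mul γ)).mul hq)
  refine this.congr_deriv ?_
  simp only [Pi.add_apply, Pi.sub_apply]
  rw [F1dnumDerivQuot, Real.rpow_sub_one hu.ne', Real.rpow_sub_one hv.ne']
  field_simp
  ring

theorem hasDerivAt_F1dnumDerivQuot_zero (γ : ℝ) :
    HasDerivAt (F1dnumDerivQuot γ) (2*γ*(2-γ)) 0 := by
  have hp : HasDerivAt (fun y : ℝ => (1+y)^(γ-1)) (1 * (γ-1) * (1+0)^(γ-1-1)) 0 :=
    ((hasDerivAt_id' 0).const_add 1).rpow_const (Or.inl (by norm_num))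
  have hq : HasDerivAt (fun y : ℝ => (1-y)^(γ-1)) ((-1) * (γ-1) * (1-0)^(γ-1-1)) 0 :=
    ((hasDerivAt_id' 0).const_sub 1).rpow_const (Or.inl (by norm_num))
  have := ((((hasDerivAt_id' 0).add_const 1).sub_const γ).mul hp).add
    ((((hasDerivAt_id' 0).sub_const 1).add_const γ).mul hq)
  refine this.congr_deriv ?_
  simp only [add_zero, sub_zero, Real.one_rpow]
  ring

theorem tendsto_F1d_div_nhdsGT_zero {γ : ℝ} (hγ0 : γ ≠ 0) (hγ2 : 2 + γ ≠ 0) :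
    Tendsto (fun t => F1d γ t / t) (𝓝[>] 0) (𝓝 (2*(2-γ)/3)) := by
  have hIoo : Ioo (-1 : ℝ) 1 ∈ 𝓝[>] 0 :=
    mem_nhdsWithin_of_mem_nhds (Ioo_mem_nhds (by norm_num) (by norm_num))
  have hcont : Tendsto (F1dnum γ) (𝓝[>] 0) (𝓝 0) := by
    have := (hasDerivAt_F1dnum γ (x := 0) (by norm_num)).continuousAt.continuousWithinAt
      (s := Ioi 0)
    simpa [F1dnum] using this.tendsto
  have hquot := tendsto_div_nhdsGT_zero_of_hasDerivAt (hasDerivAt_F1dnumDerivQuot_zero γ)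
    (by simp [F1dnumDerivQuot])
  have hcubic : Tendsto (fun x => F1dnum γ x / x ^ 3) (𝓝[>] 0)
      (𝓝 ((2+γ) * (2*γ*(2-γ)) / 3)) := by
    refine tendsto_div_pow_nhdsGT_zero 2
      (eventually_of_mem hIoo fun x hx => hasDerivAt_F1dnum γ hx) hcont ?_
    refine ((hquot.const_mul (2+γ)).div_const 3).congr' ?_
    filter_upwards [self_mem_nhdsWithin] with x hx
    field_simp [(ne_of_gt hx : x ≠ 0)]
    norm_num
  have := hcubic.div_const (γ*(2+γ))
  rw [show (2+γ) * (2*γ*(2-γ)) / 3 / (γ*(2+γ)) = 2*(2-γ)/3 by field_simp] at this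
  refine this.congr' ?_
  filter_upwards [Ioo_mem_nhdsGT (zero_lt_one' ℝ)] with x hx
  rw [F1d_eq_F1dnum_div γ hx.2]
  field_simp [(ne_of_gt hx.1 : x ≠ 0)]

theorem tendsto_F1d_nhdsGT_zero {γ : ℝ} (hγ0 : γ ≠ 0) (hγ2 : 2 + γ ≠ 0) :
    Tendsto (F1d γ) (𝓝[>] 0) (𝓝 0) := by
  have := (tendsto_F1d_div_nhdsGT_zero hγ0 hγ2).mul
    ((continuous_id.tendsto' 0 0 rfl).mono_left nhdsWithin_le_nhds)
  rw [mul_zero] at this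
  refine this.congr' ?_
  filter_upwards [self_mem_nhdsWithin] with x hx
  exact div_mul_cancel₀ _ (ne_of_gt hx)

/-- For `0 < s < 1`, `F1numInv γ s = s^(2+γ) * F1num γ (1/s) - 2γ(2+γ) s^(1+γ)`. -/
def F1numInv (γ s : ℝ) : ℝ := (1-(1+γ)*s)*(1+s)^(1+γ) - (1+(1+γ)*s)*(1-s)^(1+γ)

theorem hasDerivAt_F1numInv (γ : ℝ) {s : ℝ} (hs : s ∈ Ioo (-1) 1) :
    HasDerivAt (F1numInv γ) (-((1+γ)*(2+γ)*s*((1+s)^γ - (1-s)^γ))) s := by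
  have hu : 0 < 1 + s := by linarith [hs.1]
  have hv : 0 < 1 - s := by linarith [hs.2]
  have hp : HasDerivAt (fun x : ℝ => (1+x)^(1+γ)) (1*(1+γ)*(1+s)^(1+γ-1)) s :=
    ((hasDerivAt_id' s).const_add 1).rpow_const (Or.inl hu.ne')
  have hq : HasDerivAt (fun x : ℝ => (1-x)^(1+γ)) ((-1)*(1+γ)*(1-s)^(1+γ-1)) s :=
    ((hasDerivAt_id' s).const_sub 1).rpow_const (Or.inl hv.ne')
  have := ((((hasDerivAt_id' s).const_mul (1+γ)).const_sub 1).mul hp).sub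
    ((((hasDerivAt_id' s).const_mul (1+γ)).const_add 1).mul hq)
  refine this.congr_deriv ?_
  rw [add_sub_cancel_left, Real.rpow_add hu, Real.rpow_add hv, Real.rpow_one, Real.rpow_one]
  ring

theorem tendsto_F1numInv_div_rpow {γ : ℝ} (hγ1 : γ < 1) :
    Tendsto (fun s => F1numInv γ s / s^(1+γ)) (𝓝[>] 0) (𝓝 0) := by
  have hIoo : Ioo (-1 : ℝ) 1 ∈ 𝓝[>] 0 :=
    mem_nhdsWithin_of_mem_nhds (Ioo_mem_nhds (by norm_num) (by norm_num))
  have hcont : Tendsto (F1numInv γ) (𝓝[>] 0) (𝓝 0) := by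
    have := (hasDerivAt_F1numInv γ (s := 0) (by norm_num)).continuousAt.continuousWithinAt
      (s := Ioi 0)
    simpa [F1numInv] using this.tendsto
  have hdiff : Tendsto (fun s : ℝ => -((1+γ)*(2+γ)*((1+s)^γ - (1-s)^γ))/2) (𝓝[>] 0) (𝓝 0) := by
    have : ContinuousAt (fun s : ℝ => -((1+γ)*(2+γ)*((1+s)^γ - (1-s)^γ))/2) 0 := by
      fun_prop (disch := norm_num)
    simpa using this.continuousWithinAt.tendsto
  have hsq : Tendsto (fun s => F1numInv γ s / s^(1+1)) (𝓝[>] 0) (𝓝 0) := by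
    refine tendsto_div_pow_nhdsGT_zero 1
      (eventually_of_mem hIoo fun x hx => hasDerivAt_F1numInv γ hx) hcont (hdiff.congr' ?_)
    filter_upwards [self_mem_nhdsWithin] with x hx
    field_simp [(ne_of_gt hx : x ≠ 0)]
    ring
  have hsmall : Tendsto (fun s : ℝ => s^(1-γ)) (𝓝[>] 0) (𝓝 0) := by
    simpa [Real.zero_rpow (by linarith : (1:ℝ)-γ ≠ 0)] using
      (Real.continuousAt_rpow_const 0 (1-γ) (Or.inr (by linarith))).continuousWithinAt
        (s := Ioi 0) |>.tendsto
  have := hsq.mul hsmall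
  rw [zero_mul] at this
  refine this.congr' ?_
  filter_upwards [self_mem_nhdsWithin] with s hs
  have hs : (0:ℝ) < s := hs
  have e : s^(1+1) = s^(1-γ) * s^(1+γ) := by
    rw [← Real.rpow_add hs, ← Real.rpow_natCast]; norm_num
  rw [e]
  field_simp

theorem F1_eq_F1numInv (γ : ℝ) {t : ℝ} (ht : 1 < t) :
    F1 γ t = (2*γ*(2+γ) + F1numInv γ t⁻¹ / t⁻¹^(1+γ)) / (γ*(1+γ)*(2+γ)) := by
  have ht0 : 0 < t := by linarith
  have htm : 0 < t - 1 := by linarith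
  have htp : 0 < 1 + t := by linarith
  have hpos : 0 < t^(1+γ) := Real.rpow_pos_of_pos ht0 _
  have hp : (1+t⁻¹)^(1+γ) = (1+t)*(1+t)^γ / t^(1+γ) := by
    rw [show 1+t⁻¹ = (1+t)/t by field_simp; ring, Real.div_rpow htp.le ht0.le,
      Real.rpow_add htp, Real.rpow_one]
  have hm : (1-t⁻¹)^(1+γ) = (t-1)*(t-1)^γ / t^(1+γ) := by
    rw [show 1-t⁻¹ = (t-1)/t by field_simp, Real.div_rpow htm.le ht0.le,
      Real.rpow_add htm, Real.rpow_one]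
  rw [F1, F1numInv, hp, hm, Real.inv_rpow ht0.le, abs_sub_comm, abs_of_pos htm]
  field_simp
  ring

theorem tendsto_F1_atTop {γ : ℝ} (hγ0 : γ ≠ 0) (hγ1 : γ < 1) (hγ2 : 2 + γ ≠ 0) :
    Tendsto (F1 γ) atTop (𝓝 (2/(1+γ))) := by
  have := ((tendsto_F1numInv_div_rpow hγ1).const_add (2*γ*(2+γ))).div_const (γ*(1+γ)*(2+γ))
  rw [add_zero, show 2*γ*(2+γ) / (γ*(1+γ)*(2+γ)) = 2/(1+γ) by field_simp] at this
  refine (this.comp tendsto_inv_atTop_nhdsGT_zero).congr' ?_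
  filter_upwards [eventually_gt_atTop 1] with t ht
  exact (F1_eq_F1numInv γ ht).symm

def eta (γ r : ℝ) : ℝ := 2*r^(2-γ) - (2-γ)*r^2 - γ

def phi (γ r : ℝ) : ℝ := (2-γ)*(1-r^(2+γ)) - (2+γ)*(r^γ - r^2)

theorem hasDerivAt_eta (γ : ℝ) {r : ℝ} (hr : 0 < r) :
    HasDerivAt (eta γ) (2*(2-γ)*(r^(1-γ) - r)) r := by
  have := (((Real.hasDerivAt_rpow_const (p := 2-γ) (Or.inl hr.ne')).const_mul 2).sub
    ((hasDerivAt_pow 2 r).const_mul (2-γ))).sub_const γ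
  refine this.congr_deriv ?_
  rw [show (2-γ-1:ℝ) = 1-γ by ring]
  push_cast
  ring

theorem hasDerivAt_phi (γ : ℝ) {r : ℝ} (hr : 0 < r) :
    HasDerivAt (phi γ) ((2+γ)*r^(γ-1)*eta γ r) r := by
  have := (((Real.hasDerivAt_rpow_const (p := 2+γ) (Or.inl hr.ne')).const_sub 1).const_mul
    (2-γ)).sub (((Real.hasDerivAt_rpow_const (p := γ) (Or.inl hr.ne')).sub
    (hasDerivAt_pow 2 r)).const_mul (2+γ))
  refine this.congr_deriv ?_
  have hrγ : 0 < r^γ := Real.rpow_pos_of_pos hr γ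
  rw [eta, Real.rpow_sub_one hr.ne', Real.rpow_sub_one hr.ne', Real.rpow_add hr, Real.rpow_sub hr,
    Real.rpow_two]
  field_simp
  push_cast
  ring

theorem mul_rpow_one_sub_sub_self_pos {γ r : ℝ} (hγ0 : γ ≠ 0) (hr0 : 0 < r) (hr1 : r < 1) :
    0 < γ * (r^(1-γ) - r) := by
  rcases hγ0.lt_or_gt with hγ | hγ
  · have : r^(1-γ) < r^(1:ℝ) := Real.rpow_lt_rpow_of_exponent_gt hr0 hr1 (by linarith)
    rw [Real.rpow_one] at this
    nlinarith
  · have : r^(1:ℝ) < r^(1-γ) := Real.rpow_lt_rpow_of_exponent_gt hr0 hr1 (by linarith)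
    rw [Real.rpow_one] at this
    nlinarith

theorem mul_eta_neg {γ r : ℝ} (hγ0 : γ ≠ 0) (hγ2 : γ < 2) (hr0 : 0 < r) (hr1 : r < 1) :
    γ * eta γ r < 0 := by
  have := lt_of_hasDerivAt_pos (f := fun x => γ * eta γ x) hr1
    (fun x hx => (hasDerivAt_eta γ (hr0.trans_le hx.1)).const_mul γ)
    (fun x hx => by
      have := mul_rpow_one_sub_sub_self_pos hγ0 (hr0.trans hx.1) hx.2
      have : (0:ℝ) < 2*(2-γ) := by linarith
      nlinarith)
  simpa [eta] using this

theorem mul_phi_pos {γ r : ℝ} (hγ0 : γ ≠ 0) (hγ2 : γ ∈ Ioo (-2) 2) (hr0 : 0 < r) (hr1 : r < 1) :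
    0 < γ * phi γ r := by
  have := lt_of_hasDerivAt_pos (f := fun x => -(γ * phi γ x)) hr1
    (fun x hx => ((hasDerivAt_phi γ (hr0.trans_le hx.1)).const_mul γ).neg)
    (fun x hx => by
      have hx0 := hr0.trans hx.1
      have := mul_eta_neg hγ0 hγ2.2 hx0 hx.2
      have : 0 < (2+γ)*x^(γ-1) := mul_pos (by linarith [hγ2.1]) (Real.rpow_pos_of_pos hx0 _)
      nlinarith)
  simpa [phi] using this

theorem F1d_eq_phi (γ : ℝ) {t : ℝ} (ht : -1 < t) (ht1 : t ≠ 1) :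
    F1d γ t = (1+t)^(2+γ) * phi γ (|1-t|/(1+t)) / (4*γ*(2+γ)*t^2) := by
  have hu : 0 < 1 + t := by linarith
  have hv : 0 < |1-t| := abs_pos.2 (sub_ne_zero.2 ht1.symm)
  have hdiv : ∀ p : ℝ, (|1-t|/(1+t))^p = |1-t|^p / (1+t)^p := Real.div_rpow hv.le hu.le
  rw [phi, hdiv, hdiv, div_pow, Real.rpow_add hu, Real.rpow_add hv, Real.rpow_two,
    Real.rpow_two, sq_abs, F1d]
  have hupos := Real.rpow_pos_of_pos hu γ
  field_simp
  ring

theorem F1d_pos {γ : ℝ} (hγ0 : γ ≠ 0) (hγ2 : γ ∈ Ioo (-2) 2) {t : ℝ} (ht : 0 < t)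
    (ht1 : t ≠ 1) : 0 < F1d γ t := by
  have hu : 0 < 1 + t := by linarith
  have hv : 0 < |1-t| := abs_pos.2 (sub_ne_zero.2 ht1.symm)
  have hφ := mul_phi_pos hγ0 hγ2 (div_pos hv hu)
    ((div_lt_one hu).2 (abs_lt.2 ⟨by linarith, by linarith⟩))
  have hden : 0 < γ * (4*γ*(2+γ)*t^2) := by
    rw [show γ * (4*γ*(2+γ)*t^2) = (γ*γ) * (4*(2+γ)*t^2) by ring]
    exact mul_pos (mul_self_pos.2 hγ0) (mul_pos (by linarith [hγ2.1]) (by positivity))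
  rw [F1d_eq_phi γ (by linarith) ht1, mul_div_assoc, ← mul_div_mul_left _ _ hγ0]
  exact mul_pos (Real.rpow_pos_of_pos hu _) (div_pos hφ hden)

/-- Properties of the auxiliary function `F_{1,γ}` for `γ ∈ (-1,0) ∪ (0,1)`:
(i) the derivative formula, (ii) the symmetry `F'(1/t) = t^{2-γ} F'(t)`,
(iii) vanishing limits at `0+`, (iv) the limit `2/(1+γ)` at `+∞`,
(v) `F'(t)/t → 2(2-γ)/3` as `t → 0+`, (vi) strict positivity of `F'` on `(0,∞)`. -/
theorem F1_properties (γ : ℝ) (hγ : γ ∈ Ioo (-1:ℝ) 1) (hγ0 : γ ≠ 0) :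
    (∀ t : ℝ, 0 < t → t ≠ 1 → HasDerivAt (F1 γ) (F1d γ t) t) ∧
    (∀ t : ℝ, 0 < t → t ≠ 1 → F1d γ (1/t) = t ^ (2 - γ) * F1d γ t) ∧
    (Tendsto (F1 γ) (nhdsWithin 0 (Ioi 0)) (nhds 0) ∧
      Tendsto (F1d γ) (nhdsWithin 0 (Ioi 0)) (nhds 0)) ∧
    Tendsto (F1 γ) atTop (nhds (2/(1+γ))) ∧
    Tendsto (fun t => F1d γ t / t) (nhdsWithin 0 (Ioi 0)) (nhds (2*(2-γ)/3)) ∧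
    (∀ t : ℝ, 0 < t → t ≠ 1 → 0 < F1d γ t) := by
  obtain ⟨hγm, hγ1⟩ := hγ
  have h1γ : 1 + γ ≠ 0 := by linarith
  have h2γ : 2 + γ ≠ 0 := by linarith
  exact ⟨fun t ht ht1 => hasDerivAt_F1 hγ0 h1γ h2γ ht ht1,
    fun t ht _ => F1d_one_div γ ht,
    ⟨tendsto_F1_nhdsGT_zero γ, tendsto_F1d_nhdsGT_zero hγ0 h2γ⟩,
    tendsto_F1_atTop hγ0 hγ1 h2γ,
    tendsto_F1d_div_nhdsGT_zero hγ0 h2γ,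
    fun t ht ht1 => F1d_pos hγ0 ⟨by linarith, by linarith⟩ ht ht1⟩

end GSQGaux
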